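/- Define the bilinear-type operator 𝓐̃[f₁, f₂](x) = (1/3)·f₁((x+1)/2)² + (x/3)·f₁(x/2) + (x/3)·f₁((x+1)/2)·(f₁((x+1)/2) − f₁(x/2)) + (1/3)·f₂(x/2) + (1/3)·f₁((x+1)/2)·(f₂((x+1)/2) − f₂(x/2)). If H₁, H₂, G₁, G₂ : [0,1] → [0,1] are monotone increasing with H₁ ≥ G₁ and H₂ ≥ G₂ on [0,1], then 𝓐̃[H₁, H₂](x) ≥ 𝓐̃[G₁, G₂](x) for all x ∈ [0,1]. -/
import Mathlib


noncomputable def Atil (f₁ f₂ : ℝ → ℝ) (x : ℝ) : ℝ :=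
  (1/3) * f₁ ((x+1)/2)^2 + (x/3) * f₁ (x/2)
  + (x/3) * f₁ ((x+1)/2) * (f₁ ((x+1)/2) - f₁ (x/2))
  + (1/3) * f₂ (x/2)
  + (1/3) * f₁ ((x+1)/2) * (f₂ ((x+1)/2) - f₂ (x/2))

theorem stmt7 (H₁ H₂ G₁ G₂ : ℝ → ℝ)
    (hH₁ : ∀ x ∈ Set.Icc (0:ℝ) 1, H₁ x ∈ Set.Icc (0:ℝ) 1)
    (hH₂ : ∀ x ∈ Set.Icc (0:ℝ) 1, H₂ x ∈ Set.Icc (0:ℝ) 1)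
    (hG₁ : ∀ x ∈ Set.Icc (0:ℝ) 1, G₁ x ∈ Set.Icc (0:ℝ) 1)
    (hG₂ : ∀ x ∈ Set.Icc (0:ℝ) 1, G₂ x ∈ Set.Icc (0:ℝ) 1)
    (hmH₁ : MonotoneOn H₁ (Set.Icc (0:ℝ) 1))
    (hmH₂ : MonotoneOn H₂ (Set.Icc (0:ℝ) 1))
    (hmG₁ : MonotoneOn G₁ (Set.Icc (0:ℝ) 1))
    (hmG₂ : MonotoneOn G₂ (Set.Icc (0:ℝ) 1))
    (h₁ : ∀ x ∈ Set.Icc (0:ℝ) 1, G₁ x ≤ H₁ x)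
    (h₂ : ∀ x ∈ Set.Icc (0:ℝ) 1, G₂ x ≤ H₂ x) :
    ∀ x ∈ Set.Icc (0:ℝ) 1, Atil G₁ G₂ x ≤ Atil H₁ H₂ x := by
  rintro x ⟨hx0, hx1⟩
  have hlo : x/2 ∈ Set.Icc (0:ℝ) 1 := ⟨by linarith, by linarith⟩
  have hhi : (x+1)/2 ∈ Set.Icc (0:ℝ) 1 := ⟨by linarith, by linarith⟩
  have hle : x/2 ≤ (x+1)/2 := by linarith
  obtain ⟨haH0, haH1⟩ := hH₁ _ hhi
  obtain ⟨hbH0, hbH1⟩ := hH₁ _ hlo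
  obtain ⟨haG0, haG1⟩ := hG₁ _ hhi
  obtain ⟨hbG0, hbG1⟩ := hG₁ _ hlo
  obtain ⟨hcH0, hcH1⟩ := hH₂ _ hhi
  obtain ⟨hdH0, hdH1⟩ := hH₂ _ hlo
  obtain ⟨hcG0, hcG1⟩ := hG₂ _ hhi
  obtain ⟨hdG0, hdG1⟩ := hG₂ _ hlo
  have mH1 := hmH₁ hlo hhi hle
  have mG1 := hmG₁ hlo hhi hle
  have mH2 := hmH₂ hlo hhi hle
  have mG2 := hmG₂ hlo hhi hle
  have e1 := h₁ _ hhi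
  have e2 := h₁ _ hlo
  have e3 := h₂ _ hhi
  have e4 := h₂ _ hlo
  set aH := H₁ ((x+1)/2)
  set bH := H₁ (x/2)
  set aG := G₁ ((x+1)/2)
  set bG := G₁ (x/2)
  set cH := H₂ ((x+1)/2)
  set dH := H₂ (x/2)
  set cG := G₂ ((x+1)/2)
  set dG := G₂ (x/2)
  simp only [Atil]
  have t1 : aG^2 ≤ aH^2 := by nlinarith
  have t2 : aG^2 + bG*(1-aG) ≤ aH^2 + bH*(1-aH) := by nlinarith [mul_nonneg (sub_nonneg.2 e1) (sub_nonneg.2 (le_trans mH1 (le_refl aH)))]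
  have t3 : aG*cG + dG*(1-aG) ≤ aH*cH + dH*(1-aH) := by nlinarith
  have hx3 : 0 ≤ x/3 := by linarith
  nlinarith [mul_le_mul_of_nonneg_left t2 hx3]
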